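/- The function f : ℝ³ → ℝ defined by f(x,y,σ) = x + 6yσ − x³ − 21(xσ² − (1/8)xy⁴ + (1/3)y³σ − (1/40)x⁵) satisfies Δ_H f = 0 at every point of ℝ³. Moreover, X₁ f = 1 − 3(x²+y²) − 21σ² + (21/8)x⁴ + (49/8)y⁴ + 21xyσ and X₂ f = 6σ + 3xy − 21σ(x²+y²) + 7xy³ at every point of ℝ³. -/

import Mathlib

noncomputable section

/-- Partial derivative `∂_x` on `ℝ³ = ℝ × ℝ × ℝ` with coordinates `(x, y, σ)`. -/
def Dx (f : ℝ × ℝ × ℝ → ℝ) (p : ℝ × ℝ × ℝ) : ℝ := fderiv ℝ f p (1, 0, 0)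

/-- Partial derivative `∂_y`. -/
def Dy (f : ℝ × ℝ × ℝ → ℝ) (p : ℝ × ℝ × ℝ) : ℝ := fderiv ℝ f p (0, 1, 0)

/-- Partial derivative `∂_σ`. -/
def Ds (f : ℝ × ℝ × ℝ → ℝ) (p : ℝ × ℝ × ℝ) : ℝ := fderiv ℝ f p (0, 0, 1)

/-- The left-invariant horizontal vector field `X₁ = ∂_x − (y/2)∂_σ` of `ℍ¹`. -/
def X1 (f : ℝ × ℝ × ℝ → ℝ) (p : ℝ × ℝ × ℝ) : ℝ := Dx f p - p.2.1 / 2 * Ds f p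

/-- The left-invariant horizontal vector field `X₂ = ∂_y + (x/2)∂_σ` of `ℍ¹`. -/
def X2 (f : ℝ × ℝ × ℝ → ℝ) (p : ℝ × ℝ × ℝ) : ℝ := Dy f p + p.1 / 2 * Ds f p

/-- The right-invariant horizontal vector field `X̃₁ = ∂_x + (y/2)∂_σ` of `ℍ¹`. -/
def X1r (f : ℝ × ℝ × ℝ → ℝ) (p : ℝ × ℝ × ℝ) : ℝ := Dx f p + p.2.1 / 2 * Ds f p

/-- The right-invariant horizontal vector field `X̃₂ = ∂_y − (x/2)∂_σ` of `ℍ¹`. -/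
def X2r (f : ℝ × ℝ × ℝ → ℝ) (p : ℝ × ℝ × ℝ) : ℝ := Dy f p - p.1 / 2 * Ds f p

/-- The horizontal Laplacian `Δ_H = X₁² + X₂²` of `ℍ¹`. -/
def lapH (f : ℝ × ℝ × ℝ → ℝ) (p : ℝ × ℝ × ℝ) : ℝ := X1 (X1 f) p + X2 (X2 f) p

/-- The left carré du champ `|∇_H f|² = (X₁f)² + (X₂f)²`. -/
def gammaL (f : ℝ × ℝ × ℝ → ℝ) (p : ℝ × ℝ × ℝ) : ℝ := (X1 f p) ^ 2 + (X2 f p) ^ 2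

/-- The right carré du champ `|∇̃_H f|² = (X̃₁f)² + (X̃₂f)²`. -/
def gammaR (f : ℝ × ℝ × ℝ → ℝ) (p : ℝ × ℝ × ℝ) : ℝ := (X1r f p) ^ 2 + (X2r f p) ^ 2

/-- The counterexample function
`f(x,y,σ) = x + 6yσ − x³ − 21(xσ² − (1/8)xy⁴ + (1/3)y³σ − (1/40)x⁵)`. -/
def fex : ℝ × ℝ × ℝ → ℝ := fun p =>
  p.1 + 6 * p.2.1 * p.2.2 - p.1 ^ 3
    - 21 * (p.1 * p.2.2 ^ 2 - (1 / 8) * p.1 * p.2.1 ^ 4 + (1 / 3) * p.2.1 ^ 3 * p.2.2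
      - (1 / 40) * p.1 ^ 5)

/-! Restricted to a coordinate line, a partial derivative becomes the derivative of a
one-variable polynomial, so `X₁ f`, `X₂ f` and then `Δ_H f` are obtained by differentiating
polynomials term by term. -/

section PartialDerivatives

variable {f : ℝ × ℝ × ℝ → ℝ} {p : ℝ × ℝ × ℝ}

theorem Dx_eq_deriv (hf : DifferentiableAt ℝ f p) :
    Dx f p = deriv (fun t => f (t, p.2.1, p.2.2)) p.1 :=
  (hf.hasFDerivAt.comp_hasDerivAt p.1
    ((hasDerivAt_id p.1).prodMk (hasDerivAt_const p.1 (p.2.1, p.2.2)))).deriv.symm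

theorem Dy_eq_deriv (hf : DifferentiableAt ℝ f p) :
    Dy f p = deriv (fun t => f (p.1, t, p.2.2)) p.2.1 :=
  (hf.hasFDerivAt.comp_hasDerivAt p.2.1 ((hasDerivAt_const p.2.1 p.1).prodMk
    ((hasDerivAt_id p.2.1).prodMk (hasDerivAt_const p.2.1 p.2.2)))).deriv.symm

theorem Ds_eq_deriv (hf : DifferentiableAt ℝ f p) :
    Ds f p = deriv (fun t => f (p.1, p.2.1, t)) p.2.2 :=
  (hf.hasFDerivAt.comp_hasDerivAt p.2.2 ((hasDerivAt_const p.2.2 p.1).prodMk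
    ((hasDerivAt_const p.2.2 p.2.1).prodMk (hasDerivAt_id p.2.2)))).deriv.symm

end PartialDerivatives

theorem differentiable_fex : Differentiable ℝ fex := by
  unfold fex
  fun_prop

theorem X1_fex : X1 fex = fun p : ℝ × ℝ × ℝ =>
    1 - 3 * (p.1 ^ 2 + p.2.1 ^ 2) - 21 * p.2.2 ^ 2
      + (21 / 8) * p.1 ^ 4 + (49 / 8) * p.2.1 ^ 4 + 21 * p.1 * p.2.1 * p.2.2 := by
  funext p
  rw [X1, Dx_eq_deriv differentiable_fex.differentiableAt,
    Ds_eq_deriv differentiable_fex.differentiableAt]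
  simp (disch := fun_prop) only [fex, deriv_fun_add, deriv_fun_sub, deriv_fun_mul, deriv_fun_pow,
    deriv_id'', deriv_const, deriv_const_mul_id]
  ring

theorem X2_fex : X2 fex = fun p : ℝ × ℝ × ℝ =>
    6 * p.2.2 + 3 * p.1 * p.2.1 - 21 * p.2.2 * (p.1 ^ 2 + p.2.1 ^ 2)
      + 7 * p.1 * p.2.1 ^ 3 := by
  funext p
  rw [X2, Dy_eq_deriv differentiable_fex.differentiableAt,
    Ds_eq_deriv differentiable_fex.differentiableAt]
  simp (disch := fun_prop) only [fex, deriv_fun_add, deriv_fun_sub, deriv_fun_mul, deriv_fun_pow,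
    deriv_id'', deriv_const, deriv_const_mul_id]
  ring

theorem lapH_fex (p : ℝ × ℝ × ℝ) : lapH fex p = 0 := by
  rw [lapH, X1_fex, X2_fex, X1, X2, Dx_eq_deriv (by fun_prop), Ds_eq_deriv (by fun_prop),
    Dy_eq_deriv (by fun_prop), Ds_eq_deriv (by fun_prop)]
  simp (disch := fun_prop) only [deriv_fun_add, deriv_fun_sub, deriv_fun_mul, deriv_fun_pow,
    deriv_id'', deriv_const, deriv_const_mul_id]
  ring

/-- The function `fex` is `Δ_H`-harmonic on all of `ℝ³`, with
`X₁ f = 1 − 3(x²+y²) − 21σ² + (21/8)x⁴ + (49/8)y⁴ + 21xyσ` and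
`X₂ f = 6σ + 3xy − 21σ(x²+y²) + 7xy³`. -/
theorem fex_harmonic_and_derivatives :
    ∀ p : ℝ × ℝ × ℝ,
      lapH fex p = 0 ∧
      X1 fex p = 1 - 3 * (p.1 ^ 2 + p.2.1 ^ 2) - 21 * p.2.2 ^ 2
        + (21 / 8) * p.1 ^ 4 + (49 / 8) * p.2.1 ^ 4 + 21 * p.1 * p.2.1 * p.2.2 ∧
      X2 fex p = 6 * p.2.2 + 3 * p.1 * p.2.1 - 21 * p.2.2 * (p.1 ^ 2 + p.2.1 ^ 2)
        + 7 * p.1 * p.2.1 ^ 3 :=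
  fun p => ⟨lapH_fex p, congrFun X1_fex p, congrFun X2_fex p⟩
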